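/- With g_{j,k} defined as above, the set of pairs {(x, x ⊕ e_j) : x ∈ S_k, x_j = 0} is a set of 2^{m'−1} disjoint comparable pairs each violated by g_{j,k}; hence g_{j,k} is 2^{m'−1}/2^m-far from monotone, i.e., at least 2^{m'−1} values must change to make g_{j,k} monotone. -/

import Mathlib

def val {m : ℕ} (x : Fin m → Bool) : ℕ := ∑ i, if x i then 2 ^ (i : ℕ) else 0

/-- The block `S_k` (for `k = 1, …, 2^(m-m′)`): points `x` with
`val x ∈ [(k−1)·2^m′, k·2^m′)`. -/
def Sblock {m : ℕ} (m' k : ℕ) : Finset (Fin m → Bool) :=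
  Finset.univ.filter fun x => (k - 1) * 2 ^ m' ≤ val x ∧ val x < k * 2 ^ m'

/-- `g_{j,k} x = 2·val x − 2·2^j − 1` if `x j = 1` and `x ∈ S_k`, else `2·val x`
(0-indexed coordinate `j` has bit weight `2^j`, so twice the weight is `2^(j+1)`). -/
def gjk {m : ℕ} (m' : ℕ) (j : Fin m) (k : ℕ) (x : Fin m → Bool) : ℤ :=
  if x j = true ∧ x ∈ Sblock (m := m) m' k
  then 2 * (val x : ℤ) - 2 ^ ((j : ℕ) + 1) - 1 else 2 * (val x : ℤ)

/-!
Flipping coordinate `j < m'` from `0` to `1` adds `2^j` to `val x` without changing the block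
index `val x / 2^m'`, so the block `S_k` of size `2^m'` splits into `2^(m'-1)` comparable pairs
`x < x ⊕ e_j` inside `S_k`. On each of them `g_{j,k}` drops from `2·val x` to `2·val x - 1`, so a
monotone function must disagree with `g_{j,k}` on at least one point of every pair, and the pairs
are disjoint.
-/

open Function
open Finset hiding val

theorem card_le_card_filter_ne_of_violated_pairs {α β : Type*} [Fintype α] [Preorder α]
    [Preorder β] [DecidableEq β] {f h : α → β} (hh : Monotone h) {P : Finset α} {φ : α → α}
    (hinj : Set.InjOn φ P) (hout : ∀ x ∈ P, φ x ∉ P) (hle : ∀ x ∈ P, x ≤ φ x)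
    (hviol : ∀ x ∈ P, f (φ x) < f x) :
    #P ≤ #{x | f x ≠ h x} := by
  have witness : ∀ x ∈ P, f x = h x → f (φ x) ≠ h (φ x) := fun x hx hfx hfφ =>
    (hviol x hx).not_ge (by rw [hfx, hfφ]; exact hh (hle x hx))
  refine card_le_card_of_injOn (fun x => if f x = h x then φ x else x) (fun x hx => ?_) ?_
  · by_cases hfx : f x = h x <;> simp [hfx, witness x hx]
  · intro x hx y hy hxy
    by_cases hfx : f x = h x <;> by_cases hfy : f y = h y <;>
      simp only [hfx, hfy, if_true, if_false] at hxy
    · exact hinj hx hy hxy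
    · exact absurd (hxy ▸ hy) (hout x hx)
    · exact absurd (hxy ▸ hx) (hout y hy)
    · exact hxy

theorem Nat.add_two_pow_div_two_pow_of_mod_two_eq_zero {n j M : ℕ} (hjM : j < M)
    (hn : n / 2 ^ j % 2 = 0) : (n + 2 ^ j) / 2 ^ M = n / 2 ^ M := by
  obtain ⟨d, rfl⟩ := Nat.exists_eq_add_of_lt hjM
  have hodd : ¬ 2 ^ (d + 1) ∣ n / 2 ^ j + 1 := fun hdvd => by
    have := (dvd_pow_self 2 d.succ_ne_zero).trans hdvd
    omega
  rw [add_assoc, pow_add, ← Nat.div_div_eq_div_mul,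
    ← Nat.div_div_eq_div_mul, Nat.add_div_right n (by positivity), Nat.succ_div_of_not_dvd hodd]

theorem Function.update_update_eq_self {α β : Type*} [DecidableEq α] {f : α → β} {a : α}
    {b : β} (h : f a = b) (c : β) : update (update f a c) a b = f := by
  rw [update_idem, ← h, update_eq_self]

theorem Function.injOn_update_of_eq {α β : Type*} [DecidableEq α] (a : α) (b c : β) :
    Set.InjOn (update · a c) {f : α → β | f a = b} := fun f hf g hg hfg => by
  rw [← update_update_eq_self hf c, ← update_update_eq_self hg c]
  exact congrArg (update · a b) hfg

variable {m : ℕ}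

def bitsEquiv (m : ℕ) : (Fin m → Bool) ≃ Fin (2 ^ m) :=
  (Equiv.arrowCongr (Equiv.refl _) finTwoEquiv.symm).trans finFunctionFinEquiv

theorem bitsEquiv_apply (x : Fin m → Bool) : (bitsEquiv m x : ℕ) = val x := by
  rw [bitsEquiv, Equiv.trans_apply, finFunctionFinEquiv_apply, val]
  refine sum_congr rfl fun i _ => ?_
  cases h : x i <;> simp [finTwoEquiv, h]

theorem val_injective : Injective (val (m := m)) := fun x y hxy =>
  (bitsEquiv m).injective (Fin.ext (by rw [bitsEquiv_apply, bitsEquiv_apply, hxy]))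

theorem val_div_two_pow_mod_two (x : Fin m → Bool) (i : Fin m) :
    val x / 2 ^ (i : ℕ) % 2 = if x i then 1 else 0 := by
  have digit : (finFunctionFinEquiv.symm (bitsEquiv m x) i : ℕ) = val x / 2 ^ (i : ℕ) % 2 := by
    rw [← bitsEquiv_apply]; rfl
  rw [← digit, bitsEquiv, Equiv.trans_apply, Equiv.symm_apply_apply]
  cases h : x i <;> simp [finTwoEquiv, h]

theorem val_update_true {x : Fin m → Bool} {j : Fin m} (hx : x j = false) :
    val (update x j true) = val x + 2 ^ (j : ℕ) := by
  rw [val, val, ← add_sum_erase _ _ (mem_univ j), ← add_sum_erase _ _ (mem_univ j)]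
  simp only [update_self, hx, if_true, Bool.false_eq_true, if_false, zero_add]
  rw [add_comm]
  congr 1
  exact sum_congr rfl fun i hi => by rw [update_of_ne (ne_of_mem_erase hi)]

theorem mem_Sblock_iff {m' k : ℕ} {x : Fin m → Bool} :
    x ∈ Sblock (m := m) m' k ↔ val x / 2 ^ m' + 1 = k := by
  have hpos : 0 < 2 ^ m' := by positivity
  simp only [Sblock, mem_filter, mem_univ, true_and]
  rw [← Nat.le_div_iff_mul_le hpos, ← Nat.div_lt_iff_lt_mul hpos]
  generalize val x / 2 ^ m' = q
  omega

theorem update_true_mem_Sblock_iff {m' k : ℕ} {x : Fin m → Bool} {j : Fin m}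
    (hj : (j : ℕ) < m') (hx : x j = false) :
    update x j true ∈ Sblock (m := m) m' k ↔ x ∈ Sblock (m := m) m' k := by
  have heven : val x / 2 ^ (j : ℕ) % 2 = 0 := by rw [val_div_two_pow_mod_two, hx]; rfl
  rw [mem_Sblock_iff, mem_Sblock_iff, val_update_true hx,
    Nat.add_two_pow_div_two_pow_of_mod_two_eq_zero hj heven]

theorem card_Sblock {m' k : ℕ} (hk : 1 ≤ k) (hkm : k * 2 ^ m' ≤ 2 ^ m) :
    #(Sblock (m := m) m' k) = 2 ^ m' := by
  have hbounds : (k - 1) * 2 ^ m' + 2 ^ m' = k * 2 ^ m' := by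
    rw [← Nat.succ_mul, Nat.succ_eq_add_one, Nat.sub_add_cancel hk]
  calc #(Sblock (m := m) m' k) = #(Ico ((k - 1) * 2 ^ m') (k * 2 ^ m')) := by
        refine card_bij (fun x _ => val x) (fun x hx => by simpa [Sblock] using hx)
          (fun x _ y _ hxy => val_injective hxy) fun n hn => ?_
        rw [mem_Ico] at hn
        refine ⟨(bitsEquiv m).symm ⟨n, hn.2.trans_le hkm⟩, ?_, ?_⟩ <;>
          simp only [Sblock, mem_filter, mem_univ, true_and, ← bitsEquiv_apply,
            Equiv.apply_symm_apply]
        exact hn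
    _ = 2 ^ m' := by rw [Nat.card_Ico, ← hbounds, Nat.add_sub_cancel_left]

theorem card_Sblock_filter_eq_false {m' k : ℕ} {j : Fin m} (hj : (j : ℕ) < m') (hk : 1 ≤ k)
    (hkm : k * 2 ^ m' ≤ 2 ^ m) :
    #{x ∈ Sblock (m := m) m' k | x j = false} = 2 ^ (m' - 1) := by
  set S := Sblock (m := m) m' k
  have halves : #{x ∈ S | x j = false} = #{x ∈ S | ¬ x j = false} := by
    refine card_nbij' (update · j true) (update · j false) ?_ ?_ ?_ ?_ <;>
      intro x hx <;> simp only [coe_filter, Set.mem_ofPred_eq, Bool.not_eq_false] at hx ⊢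
    · exact ⟨(update_true_mem_Sblock_iff hj hx.2).2 hx.1, by simp⟩
    · refine ⟨(update_true_mem_Sblock_iff hj (update_self j false x)).1 ?_, by simp⟩
      rw [update_update_eq_self hx.2]
      exact hx.1
    · exact update_update_eq_self hx.2 true
    · exact update_update_eq_self hx.2 false
  have htotal := card_filter_add_card_filter_not (s := S) (fun x => x j = false)
  rw [← halves, card_Sblock hk hkm] at htotal
  obtain ⟨d, rfl⟩ := Nat.exists_eq_add_of_lt hj
  rw [pow_succ] at htotal
  simp only [Nat.add_sub_cancel]
  omega

theorem gjk_update_true_lt {m' k : ℕ} {x : Fin m → Bool} {j : Fin m} (hj : (j : ℕ) < m')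
    (hx : x ∈ Sblock (m := m) m' k) (hxj : x j = false) :
    gjk m' j k (update x j true) < gjk m' j k x := by
  have hmem := (update_true_mem_Sblock_iff hj hxj).2 hx
  rw [gjk, gjk, if_pos ⟨update_self j true x, hmem⟩, if_neg (by simp [hxj]),
    val_update_true hxj, pow_succ]
  push_cast
  linarith

/-- The pairs `(x, x ⊕ e_j)` with `x ∈ S_k`, `x j = 0` form `2^(m′−1)` disjoint
comparable pairs each violated by `g_{j,k}`; hence `g_{j,k}` is `2^(m′−1)/2^m`-far
from monotone: every monotone function differs from it on at least `2^(m′−1)` points. -/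
theorem stmt13 {m : ℕ} (m' : ℕ) (j : Fin m) (k : ℕ) (hm : m' ≤ m) (hj : (j : ℕ) < m')
    (hk1 : 1 ≤ k) (hk2 : k ≤ 2 ^ (m - m')) :
    ((Sblock (m := m) m' k).filter fun x => x j = false).card = 2 ^ (m' - 1) ∧
    (∀ x ∈ Sblock (m := m) m' k, x j = false →
      Function.update x j true ∈ Sblock (m := m) m' k ∧
      x < Function.update x j true ∧
      gjk m' j k (Function.update x j true) < gjk m' j k x) ∧
    ∀ h : (Fin m → Bool) → ℤ, Monotone h →
      2 ^ (m' - 1) ≤ (Finset.univ.filter fun x => gjk m' j k x ≠ h x).card := by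
  have hkm : k * 2 ^ m' ≤ 2 ^ m := by
    calc k * 2 ^ m' ≤ 2 ^ (m - m') * 2 ^ m' := Nat.mul_le_mul_right _ hk2
      _ = 2 ^ m := by rw [← pow_add, Nat.sub_add_cancel hm]
  have hcard := card_Sblock_filter_eq_false hj hk1 hkm
  refine ⟨hcard, fun x hx hxj => ⟨(update_true_mem_Sblock_iff hj hxj).2 hx,
    lt_update_self_iff.2 (by simp [hxj]), gjk_update_true_lt hj hx hxj⟩, fun h hh => ?_⟩
  rw [← hcard]
  exact card_le_card_filter_ne_of_violated_pairs hh
    ((injOn_update_of_eq j false true).mono fun x hx => (mem_filter.1 hx).2)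
    (fun x _ hx => by simp at hx)
    (fun x hx => (lt_update_self_iff.2 (by simp [(mem_filter.1 hx).2])).le)
    (fun x hx => gjk_update_true_lt hj (mem_filter.1 hx).1 (mem_filter.1 hx).2)
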